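/- Let z be a positive subnormal float with 2^{e_min−1} < z < 2^{e_min}, written z = m·2^{e_min−1} with 1 < m < 2. Then z ⊗ f_max = (z·2^{e_max+1})⁻ exactly, i.e., floating-point multiplication of z by f_max = (2−2^{1−p})·2^{e_max} rounds to the predecessor of z·2^{e_max+1}. -/

import Mathlib

open scoped Classical

/-- Finite binary floating-point numbers with precision `p` and exponent range
`[emin, emax]` (subnormals included), viewed as real numbers. -/
def FF (p : ℕ) (emin emax : ℤ) : Set ℝ :=
  {x | ∃ m e : ℤ, |m| < 2 ^ p ∧ emin ≤ e ∧ e ≤ emax ∧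
        x = (m : ℝ) * (2 : ℝ) ^ (e + 1 - (p : ℤ))}

/-- Binary floating-point numbers with precision `p` and unbounded exponent. -/
def FInf (p : ℕ) : Set ℝ :=
  {x | ∃ m e : ℤ, |m| < 2 ^ p ∧ x = (m : ℝ) * (2 : ℝ) ^ e}

/-- `z` has an even least-significant significand bit (canonical representation),
format with bounded exponents. -/
def evenFF (p : ℕ) (emin emax : ℤ) (z : ℝ) : Prop :=
  ∃ m e : ℤ, |m| < 2 ^ p ∧ emin ≤ e ∧ e ≤ emax ∧
    z = (m : ℝ) * (2 : ℝ) ^ (e + 1 - (p : ℤ)) ∧ 2 ∣ m ∧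
    ((2 : ℤ) ^ (p - 1) ≤ |m| ∨ e = emin)

/-- `z` has an odd least-significant significand bit (canonical representation). -/
def oddFF (p : ℕ) (emin emax : ℤ) (z : ℝ) : Prop :=
  ∃ m e : ℤ, |m| < 2 ^ p ∧ emin ≤ e ∧ e ≤ emax ∧
    z = (m : ℝ) * (2 : ℝ) ^ (e + 1 - (p : ℤ)) ∧ ¬ 2 ∣ m ∧
    ((2 : ℤ) ^ (p - 1) ≤ |m| ∨ e = emin)

/-- Evenness of the significand for the unbounded-exponent format. -/
def evenInf (p : ℕ) (z : ℝ) : Prop :=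
  ∃ m e : ℤ, z = (m : ℝ) * (2 : ℝ) ^ e ∧ 2 ∣ m ∧
    (((2 : ℤ) ^ (p - 1) ≤ |m| ∧ |m| < 2 ^ p) ∨ m = 0)

/-- `rnd` is round-to-nearest with ties-to-even onto the set `F` of representable
numbers, `even` being the evenness predicate used to break ties. -/
def IsRNE (F : Set ℝ) (even : ℝ → Prop) (rnd : ℝ → ℝ) : Prop :=
  ∀ x : ℝ, rnd x ∈ F ∧ (∀ y ∈ F, |x - rnd x| ≤ |x - y|) ∧
    (∀ y ∈ F, y ≠ rnd x → |x - rnd x| = |x - y| → even (rnd x))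

/-- The successor of `x` in the set `F`. -/
noncomputable def succF (F : Set ℝ) (x : ℝ) : ℝ := sInf {y | y ∈ F ∧ x < y}

/-- The predecessor of `x` in the set `F`. -/
noncomputable def predF (F : Set ℝ) (x : ℝ) : ℝ := sSup {y | y ∈ F ∧ y < x}

/-- The largest finite float, `f_max = (2 - 2^(1-p)) * 2^emax`. -/
noncomputable def fmax (p : ℕ) (emax : ℤ) : ℝ :=
  (2 - (2 : ℝ) ^ (1 - (p : ℤ))) * (2 : ℝ) ^ emax

/-- The smallest positive (subnormal) float, `f_min = 2^(emin+1-p)`. -/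
noncomputable def fminF (p : ℕ) (emin : ℤ) : ℝ := (2 : ℝ) ^ (emin + 1 - (p : ℤ))

/-!
Write `z = M · f_min` with `M` an integer, and let `u = 2^(emin+emax+1-p)`. Then
`v = z · 2^(emax+1) = 2M · u`, and since `2^(p-1) ≤ 2M - 1 < 2^p` the float `(2M - 1) · u` is the
predecessor of `v`: no float lies strictly between them. The product `z · f_max` equals
`v - t · u` with `t = z / 2^emin ∈ (1/2, 1)`, so it lies strictly closer to `v - u` than to `v`,
and round-to-nearest returns `v - u` without ever consulting the tie-breaking rule.
-/

theorem exists_int_mul_zpow_eq_of_le {e f : ℤ} (hef : e ≤ f) (n : ℤ) :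
    ∃ k : ℤ, (n : ℝ) * (2 : ℝ) ^ f = k * (2 : ℝ) ^ e := by
  obtain ⟨d, rfl⟩ : ∃ d : ℕ, f = e + d := ⟨(f - e).toNat, by omega⟩
  exact ⟨n * 2 ^ d, by push_cast; rw [zpow_add₀ two_ne_zero, zpow_natCast]; ring⟩

theorem exists_eq_int_mul_fminF {p : ℕ} {emin emax : ℤ} {y : ℝ} (hy : y ∈ FF p emin emax) :
    ∃ M : ℤ, y = M * fminF p emin := by
  obtain ⟨n, f, -, hf, -, rfl⟩ := hy
  exact exists_int_mul_zpow_eq_of_le (by omega) n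

theorem exists_significand_of_subnormal {p : ℕ} {emin emax : ℤ} {z : ℝ}
    (hz : z ∈ FF p emin emax) (h1 : (2 : ℝ) ^ (emin - 1) < z) (h2 : z < (2 : ℝ) ^ emin) :
    ∃ M : ℤ, z = M * fminF p emin ∧ 2 ^ p < 4 * M ∧ 2 * M < 2 ^ p := by
  obtain ⟨M, rfl⟩ := exists_eq_int_mul_fminF hz
  have hfmin : 0 < fminF p emin := by unfold fminF; positivity
  have hscale : (2 : ℝ) ^ p * fminF p emin = 2 * 2 ^ emin := by
    rw [fminF, ← zpow_natCast, ← zpow_add₀ two_ne_zero, ← zpow_one_add₀ two_ne_zero]; ring_nf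
  have hhalf : (2 : ℝ) ^ emin = 2 * 2 ^ (emin - 1) := by
    rw [← zpow_one_add₀ two_ne_zero]; ring_nf
  refine ⟨M, rfl, ?_, ?_⟩
  · have : (2 : ℝ) ^ p * fminF p emin < 4 * M * fminF p emin := by linarith
    exact_mod_cast lt_of_mul_lt_mul_right this hfmin.le
  · have : 2 * M * fminF p emin < (2 : ℝ) ^ p * fminF p emin := by linarith
    exact_mod_cast lt_of_mul_lt_mul_right this hfmin.le

theorem fmax_eq (p : ℕ) (emax : ℤ) :
    fmax p emax = (2 : ℝ) ^ (emax + 1) - (2 : ℝ) ^ (emax + 1 - (p : ℤ)) := by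
  simp only [fmax, sub_mul, ← zpow_add₀ (two_ne_zero (α := ℝ))]
  rw [show (2 : ℝ) * 2 ^ emax = 2 ^ (emax + 1) by rw [zpow_add_one₀ two_ne_zero]; ring]
  congr 2; ring

/-- Floats of exponent below `e` are smaller than `2^e ≤ k · 2^(e+1-p)`; the others are integer
multiples of `2^(e+1-p)`. -/
theorem le_int_mul_of_mem_FF_of_lt {p : ℕ} {emin emax : ℤ} {y : ℝ} (hy : y ∈ FF p emin emax)
    {e k : ℤ} (hk : 2 ^ p ≤ 2 * k) (hyk : y < (k + 1) * (2 : ℝ) ^ (e + 1 - (p : ℤ))) :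
    y ≤ k * (2 : ℝ) ^ (e + 1 - (p : ℤ)) := by
  obtain ⟨n, f, hn, -, -, rfl⟩ := hy
  have hulp : (0 : ℝ) < 2 ^ (e + 1 - (p : ℤ)) := by positivity
  rcases le_or_gt e f with hef | hfe
  · obtain ⟨j, hj⟩ := exists_int_mul_zpow_eq_of_le (show e + 1 - (p : ℤ) ≤ f + 1 - p by omega) n
    rw [hj] at hyk ⊢
    have hjk : j < k + 1 := by exact_mod_cast lt_of_mul_lt_mul_right hyk hulp.le
    gcongr
    exact_mod_cast Int.lt_add_one_iff.mp hjk
  · have hn' : (n : ℝ) < 2 ^ (p : ℤ) := by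
      rw [zpow_natCast]; exact_mod_cast (le_abs_self n).trans_lt hn
    have hk' : (2 : ℝ) ^ (p : ℤ) ≤ 2 * k := by rw [zpow_natCast]; exact_mod_cast hk
    calc (n : ℝ) * 2 ^ (f + 1 - (p : ℤ)) ≤ 2 ^ (p : ℤ) * 2 ^ (f + 1 - (p : ℤ)) := by gcongr
      _ = 2 ^ (f + 1) := by rw [← zpow_add₀ two_ne_zero]; ring_nf
      _ ≤ 2 ^ e := zpow_le_zpow_right₀ one_le_two (by omega)
      _ = 2 ^ (p : ℤ) * 2 ^ (e + 1 - (p : ℤ)) / 2 := by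
        rw [← zpow_add₀ two_ne_zero, eq_div_iff two_ne_zero, ← zpow_add_one₀ two_ne_zero]
        ring_nf
      _ ≤ k * 2 ^ (e + 1 - (p : ℤ)) := by
        rw [div_le_iff₀ two_pos]; nlinarith

theorem predF_eq_of_forall_le {F : Set ℝ} {a b : ℝ} (ha : a ∈ F) (hab : a < b)
    (hgap : ∀ y ∈ F, y < b → y ≤ a) : predF F b = a :=
  IsGreatest.csSup_eq ⟨⟨ha, hab⟩, fun y hy => hgap y hy.1 hy.2⟩

theorem IsRNE.eq_of_forall_le {F : Set ℝ} {even : ℝ → Prop} {rnd : ℝ → ℝ}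
    (hrnd : IsRNE F even rnd) {a b x : ℝ} (ha : a ∈ F) (hgap : ∀ y ∈ F, y < b → y ≤ a)
    (hax : a ≤ x) (hcloser : x - a < b - x) : rnd x = a := by
  obtain ⟨hmem, hnearest, -⟩ := hrnd x
  have hdist : |x - rnd x| ≤ x - a := (hnearest a ha).trans_eq (abs_of_nonneg (by linarith))
  rcases lt_or_ge (rnd x) b with hlt | hge
  · have := hgap _ hmem hlt
    linarith [le_abs_self (x - rnd x)]
  · linarith [neg_abs_le (x - rnd x)]

/-- For a subnormal float `z` with `2^(emin-1) < z < 2^emin`,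
`z ⊗ f_max = (z · 2^(emax+1))⁻` exactly. -/
theorem mul_fmax_subnormal (p : ℕ) (hp : 2 ≤ p) (emin emax : ℤ)
    (hemin : emin ≤ 0) (hemax : 0 ≤ emax)
    (rnd : ℝ → ℝ)
    (hrnd : IsRNE (FF p emin emax) (evenFF p emin emax) rnd)
    (z : ℝ) (hz : z ∈ FF p emin emax)
    (h1 : (2 : ℝ) ^ (emin - 1) < z) (h2 : z < (2 : ℝ) ^ emin) :
    rnd (z * fmax p emax) = predF (FF p emin emax) (z * (2 : ℝ) ^ (emax + 1)) := by
  obtain ⟨M, rfl, hMlo, hMhi⟩ := exists_significand_of_subnormal hz h1 h2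
  have h4 : (4 : ℤ) ∣ 2 ^ p := (by norm_num : (4 : ℤ) ∣ 2 ^ 2).trans (pow_dvd_pow 2 hp)
  set u : ℝ := 2 ^ (emin + emax + 1 - (p : ℤ)) with hu
  set δ : ℝ := fminF p emin * 2 ^ (emax + 1 - (p : ℤ)) with hδ
  have hfu : fminF p emin * 2 ^ (emax + 1) = 2 * u := by
    rw [fminF, hu, ← zpow_add₀ two_ne_zero, ← zpow_one_add₀ two_ne_zero]; ring_nf
  have huδ : 2 * u = 2 ^ p * δ := by
    rw [hu, hδ, fminF, ← zpow_natCast, ← zpow_add₀ two_ne_zero, ← zpow_add₀ two_ne_zero,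
      ← zpow_one_add₀ two_ne_zero]
    ring_nf
  have hv : M * fminF p emin * 2 ^ (emax + 1) = ((2 * M - 1 : ℤ) + 1) * u := by
    push_cast; linear_combination (M : ℝ) * hfu
  have hx : M * fminF p emin * fmax p emax = 2 * M * u - M * δ := by
    rw [fmax_eq]; linear_combination (M : ℝ) * hfu + (M : ℝ) * hδ
  have hpred : ((2 * M - 1 : ℤ) : ℝ) * u ∈ FF p emin emax :=
    ⟨2 * M - 1, emin + emax, by rw [abs_of_pos (by omega)]; omega, by omega, by omega, rfl⟩
  have hgap (y : ℝ) (hy : y ∈ FF p emin emax) (hyv : y < M * fminF p emin * 2 ^ (emax + 1)) :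
      y ≤ ((2 * M - 1 : ℤ) : ℝ) * u :=
    le_int_mul_of_mem_FF_of_lt hy (by omega) (hv ▸ hyv)
  have hδpos : 0 < δ := by rw [hδ, fminF]; positivity
  have hMlo' : (2 : ℝ) ^ p * δ < 4 * M * δ := by gcongr; exact_mod_cast hMlo
  have hMhi' : 2 * M * δ < (2 : ℝ) ^ p * δ := by gcongr; exact_mod_cast hMhi
  rw [predF_eq_of_forall_le hpred (by rw [hv]; gcongr; linarith) hgap]
  refine hrnd.eq_of_forall_le hpred hgap ?_ ?_
  · rw [hx]; push_cast; linarith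
  · rw [hx, hv]; push_cast; linarith
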